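/- arXiv:2004.06908 — 3 statements merged into one kernel-verified Lean document; each statement's English description precedes it below -/
import Mathlib

section
/- Let n ≥ 2, 1 ≤ l < k ≤ n with k − l = 1, α > 0, and let A = diag(a_1,…,a_n) ∈ 𝒜_{k,l} be diagonal with a = (a_1,…,a_n). Assume H_k(a) − h_l(a) = 1/2, and let ω_α(x) := ω_α(½ xᵀA x). Then the quantity μ₃(α) := β − s̄ − α ln s̄ + ∫_{s̄}^∞ (v_α(t) − 1 − α/t) dt is finite and ω_α(x) = ½ xᵀA x + α ln(½ xᵀA x) + μ₃(α) + O(|x|^{−2}) as |x| → ∞. -/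
open scoped BigOperators
open Filter MeasureTheory Set

noncomputable section

/-- Euclidean `n`-space `ℝⁿ`. -/
abbrev En (n : ℕ) : Type := EuclideanSpace ℝ (Fin n)

/-- `σ_k(a)`: the `k`-th elementary symmetric polynomial of `a : Fin n → ℝ`. -/
def esym (n k : ℕ) (a : Fin n → ℝ) : ℝ :=
  ∑ t ∈ Finset.powersetCard k (Finset.univ : Finset (Fin n)), ∏ i ∈ t, a i

/-- `σ_{k;i}(a) := σ_k(a)|_{a_i = 0}`. -/
def esymDel (n k : ℕ) (a : Fin n → ℝ) (i : Fin n) : ℝ :=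
  esym n k (Function.update a i 0)

/-- `H_k(a) = max_{1 ≤ i ≤ n} σ_{k-1;i}(a) a_i / σ_k(a)`. -/
def Hfun (n k : ℕ) (a : Fin n → ℝ) : ℝ :=
  ⨆ i : Fin n, esymDel n (k - 1) a i * a i / esym n k a

/-- `h_l(a) = min_{1 ≤ i ≤ n} σ_{l-1;i}(a) a_i / σ_l(a)`, with `h_0 = 0`. -/
def hfun (n l : ℕ) (a : Fin n → ℝ) : ℝ :=
  if l = 0 then 0 else ⨅ i : Fin n, esymDel n (l - 1) a i * a i / esym n l a

/-- The Hessian matrix `D²u(x)` of a function `u : ℝⁿ → ℝ`. -/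
def hess {n : ℕ} (u : En n → ℝ) (x : En n) : Matrix (Fin n) (Fin n) ℝ :=
  Matrix.of fun i j =>
    fderiv ℝ (fun y => fderiv ℝ u y (EuclideanSpace.single j 1)) x (EuclideanSpace.single i 1)

/-- `σ_k(λ(M))`: the `k`-th elementary symmetric function of the eigenvalues of `M`,
expressed via the coefficients of the characteristic polynomial. -/
def sigmaEig {n : ℕ} (k : ℕ) (M : Matrix (Fin n) (Fin n) ℝ) : ℝ :=
  (-1 : ℝ) ^ k * M.charpoly.coeff (n - k)

/-- The Hessian quotient operator `S_{k,l}(M) = σ_k(λ(M))/σ_l(λ(M))`. -/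
def Skl {n : ℕ} (k l : ℕ) (M : Matrix (Fin n) (Fin n) ℝ) : ℝ :=
  sigmaEig k M / sigmaEig l M

/-- The Garding cone `Γ_k = {λ : σ_j(λ) > 0, 1 ≤ j ≤ k}`. -/
def GammaCone (n k : ℕ) : Set (Fin n → ℝ) :=
  {lam | ∀ j : ℕ, 1 ≤ j → j ≤ k → 0 < esym n j lam}

/-- `ψ` is `k`-convex at `x`: the (symmetric) Hessian has eigenvalue vector in `closure Γ_k`. -/
def KConvexAt (n k : ℕ) (ψ : En n → ℝ) (x : En n) : Prop :=
  ∃ hsym : (hess ψ x).IsHermitian, hsym.eigenvalues ∈ closure (GammaCone n k)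

/-- Viscosity subsolution of `S_{k,l}(D²u) = 1` on `Ω`. -/
def ViscSubOn (n k l : ℕ) (Ω : Set (En n)) (u : En n → ℝ) : Prop :=
  UpperSemicontinuousOn u Ω ∧
  ∀ ψ : En n → ℝ, ContDiffOn ℝ 2 ψ Ω → (∀ x ∈ Ω, KConvexAt n k ψ x) →
    ∀ x₀ ∈ Ω, ψ x₀ = u x₀ → (∀ x ∈ Ω, u x ≤ ψ x) → 1 ≤ Skl k l (hess ψ x₀)

/-- Viscosity supersolution of `S_{k,l}(D²u) = 1` on `Ω`. -/
def ViscSupOn (n k l : ℕ) (Ω : Set (En n)) (u : En n → ℝ) : Prop :=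
  LowerSemicontinuousOn u Ω ∧
  ∀ ψ : En n → ℝ, ContDiffOn ℝ 2 ψ Ω → (∀ x ∈ Ω, KConvexAt n k ψ x) →
    ∀ x₀ ∈ Ω, ψ x₀ = u x₀ → (∀ x ∈ Ω, ψ x ≤ u x) → Skl k l (hess ψ x₀) ≤ 1

/-- Viscosity solution of the exterior Dirichlet problem
`S_{k,l}(D²u) = 1` in `ℝⁿ ∖ D̄`, `u = φ` on `∂D`, `u ∈ C⁰(ℝⁿ ∖ D)`. -/
def ExtViscSolution (n k l : ℕ) (D : Set (En n)) (φ u : En n → ℝ) : Prop :=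
  ContinuousOn u Dᶜ ∧
  ViscSubOn n k l (closure D)ᶜ u ∧
  ViscSupOn n k l (closure D)ᶜ u ∧
  ∀ x ∈ frontier D, u x = φ x

/-- A smooth, bounded, strictly convex open set. -/
structure SmoothStrictlyConvexDomain (n : ℕ) (D : Set (En n)) : Prop where
  isOpen : IsOpen D
  nonempty : D.Nonempty
  bounded : Bornology.IsBounded D
  strictConvex : StrictConvex ℝ D
  smoothBoundary : ∃ f : En n → ℝ, ContDiff ℝ (⊤ : ℕ∞) f ∧ D = {x | f x < 0} ∧
    ∀ x ∈ frontier D, fderiv ℝ f x ≠ 0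

/-- `½ xᵀ A x`. -/
def quadForm {n : ℕ} (A : Matrix (Fin n) (Fin n) ℝ) (x : En n) : ℝ :=
  (1 / 2) * ∑ i, ∑ j, A i j * x i * x j

/-- `s(x) = ½ ∑ a_i x_i²` (i.e. `½ xᵀAx` for `A = diag a`). -/
def sdiag {n : ℕ} (a : Fin n → ℝ) (x : En n) : ℝ :=
  (1 / 2) * ∑ i, a i * x i ^ 2

end

noncomputable section

/-- `ℋ = (k − l)/(2(H − h))`. -/
def calH (k l : ℕ) (H h : ℝ) : ℝ := ((k : ℝ) - l) / (2 * (H - h))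

/-- The defining property of the function `v_α`: for every `s > 0`, `v_α(s) > 1` and
`(v_α(s)^{k−l} − 1) v_α(s)^{2ℋh} = α s^{−ℋ}`. -/
def IsVsol (k l : ℕ) (H h α : ℝ) (v : ℝ → ℝ) : Prop :=
  ∀ s : ℝ, 0 < s → 1 < v s ∧
    (v s ^ (k - l) - 1) * v s ^ (2 * calH k l H h * h) = α * s ^ (-calH k l H h)

/-- `ω_α(x) = β + ∫_{s̄}^{½xᵀAx} v_α(t) dt` for `A = diag a`. -/
def omegaA {n : ℕ} (β sbar : ℝ) (v : ℝ → ℝ) (a : Fin n → ℝ) (x : En n) : ℝ :=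
  β + ∫ t in sbar..(sdiag a x), v t

end


/-!
With `k - l = 1` and `H - h = 1/2` we have `ℋ = 1`, so `v` solves `(v - 1) v^{2h} = α / s`
with `h ≥ 0`. Then `0 ≤ α/s - (v - 1) = (α/s)(1 - v^{-2h}) ≤ (α/s) · 2h log v ≤ 2h (α/s)²`,
so `g(t) := v(t) - 1 - α/t` is `O(t⁻²)`; `v` is antitone (the left side is increasing in `v`),
hence measurable, and `g` is integrable on `(s̄, ∞)`. Splitting `v = 1 + α/t + g` gives
`∫_{s̄}^s v = s - s̄ + α log (s/s̄) + ∫_{s̄}^∞ g - ∫_s^∞ g` with `|∫_s^∞ g| = O(1/s)`,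
and `s = ½ xᵀAx ≥ m ‖x‖²` for `m > 0` turns this into `O(‖x‖⁻²)`.
-/

lemma esym_nonneg {n k : ℕ} {a : Fin n → ℝ} (ha : 0 ≤ a) : 0 ≤ esym n k a :=
  Finset.sum_nonneg fun _ _ => Finset.prod_nonneg fun i _ => ha i

lemma hfun_nonneg {n l : ℕ} {a : Fin n → ℝ} (ha : 0 ≤ a) : 0 ≤ hfun n l a := by
  unfold hfun esymDel
  split_ifs
  · exact le_rfl
  · have hupd : ∀ i, 0 ≤ Function.update a i 0 := fun i => le_update_iff.2 ⟨le_rfl, fun j _ => ha j⟩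
    exact Real.iInf_nonneg fun i =>
      div_nonneg (mul_nonneg (esym_nonneg (hupd i)) (ha i)) (esym_nonneg ha)

lemma calH_eq_one {k l : ℕ} {H h : ℝ} (hkl : k - l = 1) (hHh : H - h = 1 / 2) :
    calH k l H h = 1 := by
  obtain rfl : k = l + 1 := by omega
  simp [calH, hHh]

lemma IsVsol.sub_one_mul_rpow_eq {k l : ℕ} {H h α : ℝ} {v : ℝ → ℝ} (hv : IsVsol k l H h α v)
    (hkl : k - l = 1) (hHh : H - h = 1 / 2) {s : ℝ} (hs : 0 < s) :
    (v s - 1) * v s ^ (2 * h) = α / s := by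
  have := (hv s hs).2
  rwa [hkl, pow_one, calH_eq_one hkl hHh, mul_one, Real.rpow_neg_one, ← div_eq_mul_inv] at this

lemma strictMonoOn_sub_one_mul_rpow {p : ℝ} (hp : 0 ≤ p) :
    StrictMonoOn (fun x : ℝ => (x - 1) * x ^ p) (Ioi 1) := by
  intro x (hx : 1 < x) y (hy : 1 < y) hxy
  calc (x - 1) * x ^ p < (y - 1) * x ^ p := by gcongr
    _ ≤ (y - 1) * y ^ p := by gcongr

lemma abs_sub_one_sub_le_of_sub_one_mul_rpow_eq {p v c : ℝ} (hp : 0 ≤ p) (hv : 1 < v)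
    (hc : (v - 1) * v ^ p = c) : |v - 1 - c| ≤ p * c ^ 2 := by
  have hvp : 1 ≤ v ^ p := Real.one_le_rpow hv.le hp
  have hvp_pos : 0 < v ^ p := by linarith
  have hc_pos : 0 < c := hc ▸ mul_pos (by linarith) hvp_pos
  have hgap : c - (v - 1) = c * (1 - (v ^ p)⁻¹) := by
    rw [← hc]; field_simp
  have hinv : (v ^ p)⁻¹ ≤ 1 := inv_le_one_of_one_le₀ hvp
  have hv_le : v - 1 ≤ c := by nlinarith
  have hlog : 1 - (v ^ p)⁻¹ ≤ p * (v - 1) := calc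
    1 - (v ^ p)⁻¹ ≤ Real.log (v ^ p) := Real.one_sub_inv_le_log_of_pos hvp_pos
    _ = p * Real.log v := Real.log_rpow (by linarith) p
    _ ≤ p * (v - 1) := by gcongr; exact Real.log_le_sub_one_of_pos (by linarith)
  rw [abs_sub_comm, abs_of_nonneg (by nlinarith)]
  calc c - (v - 1) = c * (1 - (v ^ p)⁻¹) := hgap
    _ ≤ c * (p * c) := by gcongr; exact hlog.trans (by gcongr)
    _ = p * c ^ 2 := by ring

section SubOneMulRpowEq

variable {p α : ℝ} {v : ℝ → ℝ}

lemma antitoneOn_of_sub_one_mul_rpow_eq (hp : 0 ≤ p) (hα : 0 ≤ α)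
    (hv : ∀ s, 0 < s → 1 < v s) (heq : ∀ s, 0 < s → (v s - 1) * v s ^ p = α / s) :
    AntitoneOn v (Ioi 0) := by
  intro s (hs : 0 < s) t (ht : 0 < t) hst
  refine ((strictMonoOn_sub_one_mul_rpow hp).le_iff_le (hv t ht) (hv s hs)).1 ?_
  simp only [heq s hs, heq t ht]
  gcongr

lemma abs_sub_one_sub_div_le_of_sub_one_mul_rpow_eq (hp : 0 ≤ p)
    (hv : ∀ s, 0 < s → 1 < v s) (heq : ∀ s, 0 < s → (v s - 1) * v s ^ p = α / s)
    {t : ℝ} (ht : 0 < t) : |v t - 1 - α / t| ≤ p * α ^ 2 * t ^ (-2 : ℝ) := by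
  rw [Real.rpow_neg ht.le, Real.rpow_two, mul_assoc, ← div_eq_mul_inv, ← div_pow]
  exact abs_sub_one_sub_le_of_sub_one_mul_rpow_eq hp (hv t ht) (heq t ht)

end SubOneMulRpowEq

section DecayTail

variable {g : ℝ → ℝ} {K r c : ℝ}

lemma integrableOn_Ioi_of_abs_le_rpow (hr : r < -1) (hc : 0 < c)
    (hm : AEStronglyMeasurable g (volume.restrict (Ioi c))) (hg : ∀ t > c, |g t| ≤ K * t ^ r) :
    IntegrableOn g (Ioi c) :=
  ((integrableOn_Ioi_rpow_of_lt hr hc).const_mul K).mono' hm <|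
    (ae_restrict_iff' measurableSet_Ioi).2 <| Eventually.of_forall hg

lemma abs_integral_Ioi_le_of_abs_le_rpow (hr : r < -1) (hc : 0 < c)
    (hg : ∀ t > c, |g t| ≤ K * t ^ r) :
    |∫ t in Ioi c, g t| ≤ K * (-c ^ (r + 1) / (r + 1)) := by
  rw [← integral_Ioi_rpow_of_lt hr hc, ← integral_const_mul]
  exact norm_integral_le_of_norm_le (f := g) ((integrableOn_Ioi_rpow_of_lt hr hc).const_mul K) <|
    (ae_restrict_iff' measurableSet_Ioi).2 <| Eventually.of_forall hg

end DecayTail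

lemma integrableOn_Ioi_sub_one_sub_div_of_sub_one_mul_rpow_eq {p α c : ℝ} {v : ℝ → ℝ}
    (hp : 0 ≤ p) (hα : 0 ≤ α) (hv : ∀ s, 0 < s → 1 < v s)
    (heq : ∀ s, 0 < s → (v s - 1) * v s ^ p = α / s) (hc : 0 < c) :
    IntegrableOn (fun t => v t - 1 - α / t) (Ioi c) := by
  have hv_meas : AEMeasurable v (volume.restrict (Ioi c)) :=
    aemeasurable_restrict_of_antitoneOn measurableSet_Ioi
      ((antitoneOn_of_sub_one_mul_rpow_eq hp hα hv heq).mono (Ioi_subset_Ioi hc.le))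
  refine integrableOn_Ioi_of_abs_le_rpow (by norm_num) hc ?_
    fun t ht => abs_sub_one_sub_div_le_of_sub_one_mul_rpow_eq hp hv heq (hc.trans ht)
  exact ((hv_meas.sub_const 1).sub (measurable_const.div measurable_id).aemeasurable)
    |>.aestronglyMeasurable

lemma intervalIntegrable_const_div {a b : ℝ} (ha : 0 < a) (hb : 0 < b) (c : ℝ) :
    IntervalIntegrable (fun t => c / t) volume a b := by
  simpa only [div_eq_mul_inv] using
    (intervalIntegrable_inv_iff.2 (.inr (notMem_uIcc_of_lt ha hb))).const_mul c

lemma integral_one_add_div {a b : ℝ} (ha : 0 < a) (hb : 0 < b) (c : ℝ) :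
    ∫ t in a..b, (1 + c / t) = b - a + c * Real.log (b / a) := by
  rw [intervalIntegral.integral_add intervalIntegrable_const (intervalIntegrable_const_div ha hb c)]
  simp only [div_eq_mul_inv, intervalIntegral.integral_const_mul, integral_inv_of_pos ha hb]
  simp

lemma intervalIntegral_eq_add_sub_integral_Ioi {f f₀ : ℝ → ℝ} {a b : ℝ} (hab : a ≤ b)
    (hg : IntegrableOn (fun t => f t - f₀ t) (Ioi a)) (hf₀ : IntervalIntegrable f₀ volume a b) :
    ∫ t in a..b, f t =
      (∫ t in a..b, f₀ t) + ((∫ t in Ioi a, f t - f₀ t) - ∫ t in Ioi b, f t - f₀ t) := by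
  have hgI : IntervalIntegrable (fun t => f t - f₀ t) volume a b :=
    (intervalIntegrable_iff_integrableOn_Ioc_of_le hab).2 (hg.mono_set Ioc_subset_Ioi_self)
  rw [intervalIntegral.integral_Ioi_sub_Ioi hg hab]
  exact (intervalIntegral.integral_congr fun t _ => (add_sub_cancel (f₀ t) (f t)).symm).trans
    (intervalIntegral.integral_add hf₀ hgI)

lemma abs_intervalIntegral_sub_log_expansion_le {f : ℝ → ℝ} {α β K a b : ℝ} (ha : 0 < a)
    (hab : a ≤ b) (hf : IntegrableOn (fun t => f t - 1 - α / t) (Ioi a))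
    (hdecay : ∀ t > b, |f t - 1 - α / t| ≤ K * t ^ (-2 : ℝ)) :
    |(β + ∫ t in a..b, f t) -
        (b + α * Real.log b + (β - a - α * Real.log a + ∫ t in Ioi a, (f t - 1 - α / t)))| ≤
      K / b := by
  have hb : 0 < b := ha.trans_le hab
  have htail := abs_integral_Ioi_le_of_abs_le_rpow (by norm_num) hb hdecay
  simp only [sub_sub] at hf htail ⊢
  rw [intervalIntegral_eq_add_sub_integral_Ioi hab hf (intervalIntegrable_const.add
    (intervalIntegrable_const_div ha hb α)), integral_one_add_div ha hb,
    Real.log_div hb.ne' ha.ne']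
  convert htail using 1
  · rw [← abs_neg]; congr 1; ring
  · norm_num [Real.rpow_neg_one, div_eq_mul_inv]

lemma exists_pos_mul_norm_sq_le_sdiag {n : ℕ} {a : Fin n → ℝ} (ha : ∀ i, 0 < a i) :
    ∃ m > 0, ∀ x : En n, m * ‖x‖ ^ 2 ≤ sdiag a x := by
  obtain ⟨m, hma, hm : 0 < m⟩ := ((eventually_nhdsWithin_of_eventually_nhds
    (eventually_all.2 fun i => eventually_lt_nhds (ha i))).and
    (self_mem_nhdsWithin : Ioi (0 : ℝ) ∈ nhdsWithin 0 (Ioi 0))).exists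
  refine ⟨m / 2, half_pos hm, fun x => ?_⟩
  rw [sdiag, EuclideanSpace.norm_sq_eq, div_eq_inv_mul, mul_assoc, one_div, Finset.mul_sum]
  refine mul_le_mul_of_nonneg_left (Finset.sum_le_sum fun i _ => ?_) (by norm_num)
  rw [Real.norm_eq_abs, sq_abs]
  exact mul_le_mul_of_nonneg_right (hma i).le (sq_nonneg _)

theorem omega_asymptotics_critical_general
    (n k l : ℕ)
    (hkl1 : k - l = 1)
    (α : ℝ) (hα : 0 < α)
    (a : Fin n → ℝ) (ha : ∀ i, 0 < a i)
    (hHh : Hfun n k a - hfun n l a = 1 / 2)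
    (β sbar : ℝ) (hsbar : 0 < sbar)
    (v : ℝ → ℝ) (hv : IsVsol k l (Hfun n k a) (hfun n l a) α v) :
    IntegrableOn (fun t => v t - 1 - α / t) (Set.Ioi sbar) ∧
    ∃ C R : ℝ, 0 < C ∧ 0 < R ∧ ∀ x : En n, R ≤ ‖x‖ →
      |omegaA β sbar v a x -
          (sdiag a x + α * Real.log (sdiag a x) +
            (β - sbar - α * Real.log sbar + ∫ t in Set.Ioi sbar, (v t - 1 - α / t)))| ≤
        C * ‖x‖ ^ (-2 : ℝ) := by
  have hp : 0 ≤ 2 * hfun n l a := mul_nonneg zero_le_two (hfun_nonneg fun i => (ha i).le)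
  have hv1 : ∀ s, 0 < s → 1 < v s := fun s hs => (hv s hs).1
  have heq : ∀ s, 0 < s → (v s - 1) * v s ^ (2 * hfun n l a) = α / s :=
    fun s hs => hv.sub_one_mul_rpow_eq hkl1 hHh hs
  have hint := integrableOn_Ioi_sub_one_sub_div_of_sub_one_mul_rpow_eq hp hα.le hv1 heq hsbar
  refine ⟨hint, ?_⟩
  obtain ⟨m, hm, hmx⟩ := exists_pos_mul_norm_sq_le_sdiag ha
  set K := 2 * hfun n l a * α ^ 2
  refine ⟨(K + 1) / m, √(sbar / m), by positivity, by positivity, fun x hx => ?_⟩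
  have hx0 : 0 < ‖x‖ := (Real.sqrt_pos.2 (by positivity)).trans_le hx
  have hs : sbar ≤ sdiag a x := calc
    sbar = m * √(sbar / m) ^ 2 := by rw [Real.sq_sqrt (by positivity)]; field_simp
    _ ≤ m * ‖x‖ ^ 2 := by gcongr
    _ ≤ sdiag a x := hmx x
  calc _ ≤ K / sdiag a x := abs_intervalIntegral_sub_log_expansion_le hsbar hs hint fun t ht =>
        abs_sub_one_sub_div_le_of_sub_one_mul_rpow_eq hp hv1 heq ((hsbar.trans_le hs).trans ht)
    _ ≤ K / (m * ‖x‖ ^ 2) := by gcongr; exact hmx x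
    _ = K / m * ‖x‖ ^ (-2 : ℝ) := by rw [Real.rpow_neg hx0.le, Real.rpow_two]; field_simp
    _ ≤ (K + 1) / m * ‖x‖ ^ (-2 : ℝ) := by gcongr; linarith

/-- Proposition 2.2 (iii): asymptotics of `ω_α` when `k − l = 1` and `H_k − h_l = 1/2`. -/
theorem omega_asymptotics_critical
    (n k l : ℕ) (hn : 2 ≤ n) (hl1 : 1 ≤ l) (hlk : l < k) (hkn : k ≤ n)
    (hkl1 : k - l = 1)
    (α : ℝ) (hα : 0 < α)
    (a : Fin n → ℝ) (ha : ∀ i, 0 < a i)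
    (hA : esym n k a = esym n l a)
    (hHh : Hfun n k a - hfun n l a = 1 / 2)
    (β sbar : ℝ) (hsbar : 0 < sbar)
    (v : ℝ → ℝ) (hv : IsVsol k l (Hfun n k a) (hfun n l a) α v) :
    IntegrableOn (fun t => v t - 1 - α / t) (Set.Ioi sbar) ∧
    ∃ C R : ℝ, 0 < C ∧ 0 < R ∧ ∀ x : En n, R ≤ ‖x‖ →
      |omegaA β sbar v a x -
          (sdiag a x + α * Real.log (sdiag a x) +
            (β - sbar - α * Real.log sbar + ∫ t in Set.Ioi sbar, (v t - 1 - α / t)))| ≤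
        C * ‖x‖ ^ (-2 : ℝ) :=
  omega_asymptotics_critical_general n k l hkl1 α hα a ha hHh β sbar hsbar v hv
end

section
/- Let n ≥ 2, 1 ≤ l < k ≤ n with k − l = 1, α > 0, and let A = diag(a_1,…,a_n) ∈ 𝒜_{k,l} be diagonal with a = (a_1,…,a_n). Assume H_k(a) − h_l(a) > 1/2, write H = H_k(a), h = h_l(a), and let ω_α(x) := ω_α(½ xᵀA x). Then there exist a finite constant μ₄(α) and θ ∈ (−1, 0) such that, as |x| → ∞, ω_α(x) = ½ xᵀA x + (α/(1 − 1/(2(H−h)))) · (½ xᵀA x)^{1 − 1/(2(H−h))} + μ₄(α) + O(|x|^{2θ}). -/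
open scoped BigOperators
open Filter MeasureTheory Set

section AuxLemmas
open Filter

lemma esym_pos (n m : ℕ) (hm : m ≤ n) (a : Fin n → ℝ) (ha : ∀ i, 0 < a i) :
    0 < esym n m a := by
  apply Finset.sum_pos
  · intro t ht
    exact Finset.prod_pos fun i _ => ha i
  · exact Finset.powersetCard_nonempty.mpr (by simpa using hm)

lemma esymDel_eq (n m : ℕ) (a : Fin n → ℝ) (i : Fin n) :
    esymDel n m a i =
      ∑ t ∈ Finset.powersetCard m ((Finset.univ : Finset (Fin n)).erase i),
        ∏ j ∈ t, a j := by
  unfold esymDel esym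
  rw [← Finset.sum_subset
      (Finset.powersetCard_mono (Finset.erase_subset _ _))]
  · apply Finset.sum_congr rfl
    intro t ht
    apply Finset.prod_congr rfl
    intro j hj
    have hji : j ≠ i := by
      have := (Finset.mem_powersetCard.mp ht).1 hj
      exact Finset.ne_of_mem_erase this
    simp [Function.update_of_ne hji]
  · intro t ht hts
    have hit : i ∈ t := by
      by_contra hit
      apply hts
      rw [Finset.mem_powersetCard] at ht ⊢
      exact ⟨fun j hj => Finset.mem_erase.mpr ⟨fun h => hit (h ▸ hj), ht.1 hj⟩, ht.2⟩
    exact Finset.prod_eq_zero hit (by simp)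

lemma esymDel_pos (n m : ℕ) (hm : m ≤ n - 1) (a : Fin n → ℝ) (ha : ∀ i, 0 < a i)
    (i : Fin n) : 0 < esymDel n m a i := by
  rw [esymDel_eq]
  apply Finset.sum_pos
  · intro t ht
    exact Finset.prod_pos fun j _ => ha j
  · refine Finset.powersetCard_nonempty.mpr ?_
    rw [Finset.card_erase_of_mem (Finset.mem_univ i), Finset.card_univ, Fintype.card_fin]
    exact hm

lemma esymDel_mul_le (n k : ℕ) (hk : 1 ≤ k) (a : Fin n → ℝ) (ha : ∀ i, 0 < a i)
    (i : Fin n) : esymDel n (k - 1) a i * a i ≤ esym n k a := by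
  rw [esymDel_eq, Finset.sum_mul]
  have : ∀ t ∈ Finset.powersetCard (k-1) ((Finset.univ : Finset (Fin n)).erase i),
      (∏ j ∈ t, a j) * a i = ∏ j ∈ insert i t, a j := by
    intro t ht
    have hit : i ∉ t := fun h =>
      Finset.notMem_erase i _ ((Finset.mem_powersetCard.mp ht).1 h)
    rw [Finset.prod_insert hit, mul_comm]
  rw [Finset.sum_congr rfl this]
  have hinj : ∀ t ∈ Finset.powersetCard (k-1) ((Finset.univ : Finset (Fin n)).erase i),
      ∀ u ∈ Finset.powersetCard (k-1) ((Finset.univ : Finset (Fin n)).erase i),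
      insert i t = insert i u → t = u := by
    intro t ht u hu h
    have hit : i ∉ t := fun hh =>
      Finset.notMem_erase i _ ((Finset.mem_powersetCard.mp ht).1 hh)
    have hiu : i ∉ u := fun hh =>
      Finset.notMem_erase i _ ((Finset.mem_powersetCard.mp hu).1 hh)
    have := congrArg (Finset.erase · i) h
    simpa [Finset.erase_insert hit, Finset.erase_insert hiu] using this
  rw [← Finset.sum_image (f := fun t => ∏ j ∈ t, a j) (g := fun t => insert i t) hinj]
  apply Finset.sum_le_sum_of_subset_of_nonneg
  · intro u hu
    simp only [Finset.mem_image] at hu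
    obtain ⟨t, ht, rfl⟩ := hu
    rw [Finset.mem_powersetCard] at ht ⊢
    have hit : i ∉ t := fun hh => Finset.notMem_erase i _ (ht.1 hh)
    refine ⟨Finset.subset_univ _, ?_⟩
    rw [Finset.card_insert_of_notMem hit, ht.2]
    omega
  · intro t _ _
    exact le_of_lt (Finset.prod_pos fun j _ => ha j)

lemma Hfun_le_one (n k : ℕ) (hn : 1 ≤ n) (hk1 : 1 ≤ k) (hkn : k ≤ n)
    (a : Fin n → ℝ) (ha : ∀ i, 0 < a i) : Hfun n k a ≤ 1 := by
  haveI : Nonempty (Fin n) := Fin.pos_iff_nonempty.mp (by omega)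
  apply ciSup_le
  intro i
  rw [div_le_one (esym_pos n k hkn a ha)]
  exact esymDel_mul_le n k hk1 a ha i

lemma hfun_pos (n l : ℕ) (hn : 1 ≤ n) (hl1 : 1 ≤ l) (hln : l ≤ n)
    (a : Fin n → ℝ) (ha : ∀ i, 0 < a i) : 0 < hfun n l a := by
  haveI : Nonempty (Fin n) := Fin.pos_iff_nonempty.mp (by omega)
  rw [hfun, if_neg (by omega)]
  have hpos : ∀ i : Fin n, 0 < esymDel n (l - 1) a i * a i / esym n l a := by
    intro i
    exact div_pos (mul_pos (esymDel_pos n (l-1) (by omega) a ha i) (ha i))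
      (esym_pos n l hln a ha)
  obtain ⟨i₀, hi₀⟩ := Finite.exists_min
    (fun i : Fin n => esymDel n (l - 1) a i * a i / esym n l a)
  calc (0:ℝ) < _ := hpos i₀
  _ ≤ _ := le_ciInf hi₀


lemma one_sub_rpow_neg_le {x p : ℝ} (hx : 1 ≤ x) (hp : 0 ≤ p) :
    1 - x ^ (-p) ≤ p * (x - 1) := by
  have hx0 : 0 < x := lt_of_lt_of_le one_pos hx
  have h1 : x ^ (-p) = Real.exp (-p * Real.log x) := by
    rw [Real.rpow_def_of_pos hx0, mul_comm]
  have h2 : -p * Real.log x + 1 ≤ Real.exp (-p * Real.log x) :=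
    Real.add_one_le_exp _
  have h3 : Real.log x ≤ x - 1 := Real.log_le_sub_one_of_pos hx0
  have h4 : p * Real.log x ≤ p * (x - 1) := mul_le_mul_of_nonneg_left h3 hp
  nlinarith [h1 ▸ h2]

lemma exists_limit_of_tail_bound (Φ : ℝ → ℝ) (sb B θ : ℝ) (hsb : 0 < sb) (hθ : θ < 0)
    (hΦ : ∀ s₁ s₂ : ℝ, sb ≤ s₁ → s₁ ≤ s₂ → |Φ s₂ - Φ s₁| ≤ B * s₁ ^ θ) :
    ∃ L : ℝ, ∀ s, sb ≤ s → |Φ s - L| ≤ B * s ^ θ := by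
  set u : ℕ → ℝ := fun m => Φ (sb + m) with hu
  have key : ∀ N m : ℕ, N ≤ m → dist (u m) (u N) ≤ B * (sb + N) ^ θ := by
    intro N m h
    rw [Real.dist_eq]
    exact hΦ _ _ (by simp [le_add_of_nonneg_right, Nat.cast_nonneg])
      (by have : (N:ℝ) ≤ m := Nat.cast_le.mpr h; linarith)
  have hθ0 : Tendsto (fun s : ℝ => s ^ θ) atTop (nhds 0) := by
    have := tendsto_rpow_neg_atTop (neg_pos.mpr hθ)
    simpa using this
  have hb0 : Tendsto (fun N : ℕ => 2 * (B * (sb + N) ^ θ)) atTop (nhds 0) := by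
    have h1 : Tendsto (fun N : ℕ => sb + (N:ℝ)) atTop atTop :=
      tendsto_atTop_add_const_left _ _ tendsto_natCast_atTop_atTop
    have := ((hθ0.comp h1).const_mul B).const_mul 2
    simpa using this
  have hcau : CauchySeq u := by
    apply cauchySeq_of_le_tendsto_0 (fun N : ℕ => 2 * (B * (sb + (N:ℝ)) ^ θ)) _ hb0
    intro m m' N hm hm'
    calc dist (u m) (u m') ≤ dist (u m) (u N) + dist (u N) (u m') := dist_triangle _ _ _
    _ ≤ B * (sb + N) ^ θ + B * (sb + N) ^ θ := by
        refine add_le_add (key N m hm) ?_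
        rw [dist_comm]; exact key N m' hm'
    _ = 2 * (B * (sb + N) ^ θ) := by ring
  obtain ⟨L, hL⟩ := cauchySeq_tendsto_of_complete hcau
  refine ⟨L, fun s hs => ?_⟩
  have htend : Tendsto (fun m : ℕ => |Φ s - u m|) atTop (nhds |Φ s - L|) :=
    ((tendsto_const_nhds.sub hL).abs)
  refine le_of_tendsto htend ?_
  obtain ⟨M, hM⟩ := exists_nat_ge (s - sb)
  filter_upwards [eventually_ge_atTop M] with m hm
  have hsm : s ≤ sb + m := by
    have : (M:ℝ) ≤ m := Nat.cast_le.mpr hm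
    linarith
  rw [abs_sub_comm]
  exact hΦ s _ hs hsm

end AuxLemmas

set_option maxHeartbeats 2000000 in
/-- Proposition 2.2 (iv): asymptotics of `ω_α` when `k − l = 1` and `H_k − h_l > 1/2`. -/
theorem omega_asymptotics_supercritical
    (n k l : ℕ) (hn : 2 ≤ n) (hl1 : 1 ≤ l) (hlk : l < k) (hkn : k ≤ n)
    (hkl1 : k - l = 1)
    (α : ℝ) (hα : 0 < α)
    (a : Fin n → ℝ) (ha : ∀ i, 0 < a i)
    (hA : esym n k a = esym n l a)
    (hHh : 1 / 2 < Hfun n k a - hfun n l a)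
    (β sbar : ℝ) (hsbar : 0 < sbar)
    (v : ℝ → ℝ) (hv : IsVsol k l (Hfun n k a) (hfun n l a) α v) :
    ∃ μ θ : ℝ, -1 < θ ∧ θ < 0 ∧
      ∃ C R : ℝ, 0 < C ∧ 0 < R ∧ ∀ x : En n, R ≤ ‖x‖ →
        |omegaA β sbar v a x -
            (sdiag a x +
              α / (1 - 1 / (2 * (Hfun n k a - hfun n l a))) *
                sdiag a x ^ (1 - 1 / (2 * (Hfun n k a - hfun n l a))) + μ)| ≤
          C * ‖x‖ ^ (2 * θ) := by
  haveI : Nonempty (Fin n) := Fin.pos_iff_nonempty.mp (by omega)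
  set HH := Hfun n k a with hHdef
  set hh := hfun n l a with hhdef
  have hkeq : k = l + 1 := by omega
  have hH1 : HH ≤ 1 := Hfun_le_one n k (by omega) (by omega) hkn a ha
  have hh0 : 0 < hh := hfun_pos n l (by omega) hl1 (by omega) a ha
  have hHhpos : 0 < HH - hh := by linarith
  have hHhlt : HH - hh < 1 := by linarith
  clear_value HH hh
  set E := calH k l HH hh with hEdef
  clear_value E
  have hE : E = 1 / (2 * (HH - hh)) := by
    rw [hEdef, calH, hkeq]; push_cast; ring
  have hEgt : 1 / 2 < E := by
    rw [hE, div_lt_div_iff₀ (by norm_num) (by linarith)]; linarith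
  have hElt : E < 1 := by
    rw [hE, div_lt_one (by linarith)]; linarith
  have hEpos : 0 < E := by linarith
  set p := 2 * E * hh with hpdef
  clear_value p
  have hp0 : 0 ≤ p := by rw [hpdef]; positivity
  set θ := 1 - 2 * E with hθdef
  clear_value θ
  have hθneg : θ < 0 := by rw [hθdef]; linarith
  have hθgt : -1 < θ := by rw [hθdef]; linarith
  have hθne : θ ≠ 0 := ne_of_lt hθneg
  -- facts about v
  have hv1 : ∀ s : ℝ, 0 < s → 1 < v s := fun s hs => (hv s hs).1
  have hrel : ∀ s : ℝ, 0 < s → (v s - 1) * v s ^ p = α * s ^ (-E) := by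
    intro s hs
    have h2 := (hv s hs).2
    rwa [hkl1, pow_one, ← hEdef, ← hpdef] at h2
  have hvub : ∀ s : ℝ, 0 < s → v s - 1 ≤ α * s ^ (-E) := by
    intro s hs
    have h1 := hv1 s hs
    have h2 := hrel s hs
    have h3 : 1 ≤ v s ^ p := Real.one_le_rpow h1.le hp0
    nlinarith [mul_nonneg (sub_nonneg.mpr h1.le) (sub_nonneg.mpr h3)]
  set K := α ^ 2 * p with hKdef
  clear_value K
  have hK0 : 0 ≤ K := by rw [hKdef]; positivity
  have hgb : ∀ s : ℝ, 0 < s → |v s - 1 - α * s ^ (-E)| ≤ K * s ^ (-(2*E)) := by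
    intro s hs
    have h1 := hv1 s hs
    have h2 := hrel s hs
    have hA : 0 < α * s ^ (-E) := mul_pos hα (Real.rpow_pos_of_pos hs _)
    have hwp : 0 < v s ^ p := Real.rpow_pos_of_pos (by linarith) p
    have hwp1 : 1 ≤ v s ^ p := Real.one_le_rpow h1.le hp0
    have hq : v s ^ (-p) = (v s ^ p)⁻¹ := Real.rpow_neg (by linarith) p
    have heq : v s - 1 = (α * s ^ (-E)) * (v s ^ p)⁻¹ := by
      field_simp
      linarith [h2]
    have hber : 1 - (v s ^ p)⁻¹ ≤ p * (v s - 1) := by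
      have hb := one_sub_rpow_neg_le h1.le hp0
      rwa [hq] at hb
    have hqle : (v s ^ p)⁻¹ ≤ 1 := inv_le_one_of_one_le₀ hwp1
    have hvs : v s - 1 ≤ α * s ^ (-E) := hvub s hs
    have hss : s ^ (-E) * s ^ (-E) = s ^ (-(2*E)) := by
      rw [← Real.rpow_add hs]; ring_nf
    have hneg : v s - 1 - α * s ^ (-E) =
        -((α * s ^ (-E)) * (1 - (v s ^ p)⁻¹)) := by rw [heq]; ring
    rw [hneg, abs_neg, abs_of_nonneg (mul_nonneg hA.le (by linarith))]
    calc (α * s ^ (-E)) * (1 - (v s ^ p)⁻¹)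
        ≤ (α * s ^ (-E)) * (p * (v s - 1)) :=
          mul_le_mul_of_nonneg_left hber hA.le
      _ ≤ (α * s ^ (-E)) * (p * (α * s ^ (-E))) :=
          mul_le_mul_of_nonneg_left (mul_le_mul_of_nonneg_left hvs hp0) hA.le
      _ = K * s ^ (-(2*E)) := by rw [hKdef, ← hss]; ring
  have hanti : AntitoneOn v (Set.Ioi (0:ℝ)) := by
    intro s₁ hs₁ s₂ hs₂ h12
    rw [Set.mem_Ioi] at hs₁ hs₂
    by_contra hlt
    push_neg at hlt
    have h11 := hv1 s₁ hs₁
    have h21 := hv1 s₂ hs₂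
    have hr1 := hrel s₁ hs₁
    have hr2 := hrel s₂ hs₂
    have hpow : v s₁ ^ p ≤ v s₂ ^ p := Real.rpow_le_rpow (by linarith) hlt.le hp0
    have hpow1 : (1:ℝ) ≤ v s₁ ^ p := Real.one_le_rpow h11.le hp0
    have e1 : (v s₁ - 1) * v s₁ ^ p < (v s₂ - 1) * v s₁ ^ p :=
      mul_lt_mul_of_pos_right (by linarith) (by linarith)
    have e2 : (v s₂ - 1) * v s₁ ^ p ≤ (v s₂ - 1) * v s₂ ^ p :=
      mul_le_mul_of_nonneg_left hpow (by linarith)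
    have hrhs : s₂ ^ (-E) ≤ s₁ ^ (-E) :=
      Real.rpow_le_rpow_of_nonpos hs₁ h12 (by linarith)
    have e3 : α * s₂ ^ (-E) ≤ α * s₁ ^ (-E) := mul_le_mul_of_nonneg_left hrhs hα.le
    linarith
  set c0 : ℝ := α / (1 - E) with hc0
  clear_value c0
  set Φ : ℝ → ℝ := fun s => (∫ t in sbar..s, v t) - s - c0 * s ^ (1 - E) with hΦdef
  clear_value Φ
  set B := K / (2*E - 1) with hBdef
  clear_value B
  have hB0 : 0 ≤ B := by rw [hBdef]; exact div_nonneg hK0 (by linarith)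
  have hest : ∀ s₁ s₂ : ℝ, sbar ≤ s₁ → s₁ ≤ s₂ → |Φ s₂ - Φ s₁| ≤ B * s₁ ^ θ := by
    intro s₁ s₂ hs1 h12
    have hs1p : 0 < s₁ := lt_of_lt_of_le hsbar hs1
    have hs2p : 0 < s₂ := lt_of_lt_of_le hs1p h12
    have hsub : Set.uIcc s₁ s₂ ⊆ Set.Ioi (0:ℝ) := by
      rw [Set.uIcc_of_le h12]; intro t ht; exact lt_of_lt_of_le hs1p ht.1
    have hnot0 : (0:ℝ) ∉ Set.uIcc s₁ s₂ := fun hc => lt_irrefl 0 (Set.mem_Ioi.mp (hsub hc))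
    have hsub' : Set.uIcc sbar s₁ ⊆ Set.Ioi (0:ℝ) := by
      rw [Set.uIcc_of_le hs1]; intro t ht; exact lt_of_lt_of_le hsbar ht.1
    have hintv12 : IntervalIntegrable v volume s₁ s₂ :=
      (hanti.mono hsub).intervalIntegrable
    have hintv01 : IntervalIntegrable v volume sbar s₁ :=
      (hanti.mono hsub').intervalIntegrable
    have hintr : IntervalIntegrable (fun t : ℝ => t ^ (-E)) volume s₁ s₂ :=
      intervalIntegral.intervalIntegrable_rpow (Or.inr hnot0)
    have hintr2 : IntervalIntegrable (fun t : ℝ => t ^ (-(2*E))) volume s₁ s₂ :=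
      intervalIntegral.intervalIntegrable_rpow (Or.inr hnot0)
    have hintf0 : IntervalIntegrable (fun t : ℝ => 1 + α * t ^ (-E)) volume s₁ s₂ :=
      intervalIntegrable_const.add (hintr.const_mul α)
    have hintg : IntervalIntegrable (fun t : ℝ => v t - (1 + α * t ^ (-E))) volume s₁ s₂ :=
      hintv12.sub hintf0
    have hsplit : (∫ t in sbar..s₂, v t) - (∫ t in sbar..s₁, v t) = ∫ t in s₁..s₂, v t := by
      rw [← intervalIntegral.integral_add_adjacent_intervals hintv01 hintv12]; ring
    have hf0int : (∫ t in s₁..s₂, (1 + α * t ^ (-E))) =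
        (s₂ - s₁) + c0 * s₂ ^ (1 - E) - c0 * s₁ ^ (1 - E) := by
      rw [intervalIntegral.integral_add intervalIntegrable_const (hintr.const_mul α),
        intervalIntegral.integral_const_mul, integral_rpow (Or.inl (by linarith)),
        intervalIntegral.integral_const]
      have hme : -E + 1 = 1 - E := by ring
      rw [hme, hc0, smul_eq_mul]
      have h1E : (1:ℝ) - E ≠ 0 := by intro hc; rw [sub_eq_zero] at hc; exact (ne_of_lt hElt) hc.symm
      field_simp
      ring
    have hΦeq : Φ s₂ - Φ s₁ = ∫ t in s₁..s₂, (v t - (1 + α * t ^ (-E))) := by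
      rw [intervalIntegral.integral_sub hintv12 hintf0, hf0int]
      simp only [hΦdef]
      rw [← hsplit]
      ring
    rw [hΦeq]
    calc |∫ t in s₁..s₂, (v t - (1 + α * t ^ (-E)))|
        ≤ ∫ t in s₁..s₂, |v t - (1 + α * t ^ (-E))| :=
          intervalIntegral.abs_integral_le_integral_abs h12
      _ ≤ ∫ t in s₁..s₂, K * t ^ (-(2*E)) := by
          apply intervalIntegral.integral_mono_on h12 hintg.abs (hintr2.const_mul K)
          intro t ht
          have htp : 0 < t := lt_of_lt_of_le hs1p ht.1
          have hgt := hgb t htp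
          have : v t - (1 + α * t ^ (-E)) = v t - 1 - α * t ^ (-E) := by ring
          rw [this]
          exact hgt
      _ = K * ((s₂ ^ θ - s₁ ^ θ) / θ) := by
          rw [intervalIntegral.integral_const_mul,
            integral_rpow (Or.inr ⟨by intro hc; rw [neg_eq_iff_eq_neg] at hc; nlinarith, hnot0⟩)]
          have : -(2*E) + 1 = θ := by rw [hθdef]; ring
          rw [this]
      _ ≤ B * s₁ ^ θ := by
          have h2E : 0 < 2*E - 1 := by linarith
          have hs2θ : 0 ≤ s₂ ^ θ := Real.rpow_nonneg hs2p.le θ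
          have hne : (1:ℝ) - 2*E ≠ 0 := by intro hc; nlinarith
          have hne2 : (2:ℝ)*E - 1 ≠ 0 := ne_of_gt h2E
          have heq2 : K * ((s₂ ^ θ - s₁ ^ θ) / θ) = B * (s₁ ^ θ - s₂ ^ θ) := by
            rw [hBdef, hθdef]
            field_simp
            ring
          rw [heq2]
          have : B * (s₁ ^ θ - s₂ ^ θ) ≤ B * s₁ ^ θ :=
            mul_le_mul_of_nonneg_left (by linarith) hB0
          exact this
  obtain ⟨L, hL⟩ := exists_limit_of_tail_bound Φ sbar B θ hsbar hθneg hest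
  obtain ⟨i₀, hi₀⟩ := Finite.exists_min a
  set m := a i₀ with hmdef
  have hm0 : 0 < m := ha i₀
  clear_value m
  set R := max 1 (Real.sqrt (2 * sbar / m)) with hRdef
  have hR0 : 0 < R := lt_of_lt_of_le one_pos (le_max_left _ _)
  set C := B * (m/2) ^ θ + 1 with hCdef
  clear_value C
  have hBm0 : 0 ≤ B * (m/2) ^ θ := mul_nonneg hB0 (Real.rpow_nonneg (by positivity) θ)
  have hC0 : 0 < C := by rw [hCdef]; linarith
  refine ⟨β + L, θ, hθgt, hθneg, C, R, hC0, hR0, ?_⟩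
  intro x hx
  set s := sdiag a x with hsdef
  have hx1 : 1 ≤ ‖x‖ := le_trans (le_max_left _ _) hx
  have hx0 : 0 < ‖x‖ := lt_of_lt_of_le one_pos hx1
  have hnormsq : ‖x‖ ^ 2 = ∑ i, x i ^ 2 := by
    rw [EuclideanSpace.norm_eq, Real.sq_sqrt (Finset.sum_nonneg fun i _ => by positivity)]
    exact Finset.sum_congr rfl fun i _ => by rw [Real.norm_eq_abs, sq_abs]
  have hsge : m / 2 * ‖x‖ ^ 2 ≤ s := by
    rw [hsdef, sdiag, hnormsq, Finset.mul_sum, Finset.mul_sum]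
    apply Finset.sum_le_sum
    intro i _
    have hmi := hi₀ i
    nlinarith [sq_nonneg (x i)]
  have hxR2 : 2 * sbar / m ≤ ‖x‖ ^ 2 := by
    have h1 : Real.sqrt (2 * sbar / m) ≤ ‖x‖ := le_trans (le_max_right _ _) hx
    have h2 : (0:ℝ) ≤ 2 * sbar / m := by positivity
    nlinarith [Real.sq_sqrt h2, Real.sqrt_nonneg (2*sbar/m)]
  have hssbar : sbar ≤ s := by
    have hle : m / 2 * (2 * sbar / m) ≤ m/2 * ‖x‖^2 :=
      mul_le_mul_of_nonneg_left hxR2 (by positivity)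
    have heqm : m / 2 * (2 * sbar / m) = sbar := by field_simp
    linarith
  have hmain := hL s hssbar
  have hgoalEq : omegaA β sbar v a x -
      (s + α / (1 - 1 / (2 * (HH - hh))) * s ^ (1 - 1 / (2 * (HH - hh))) + (β + L)) =
      Φ s - L := by
    simp only [omegaA, hΦdef, ← hsdef, ← hE, ← hc0]
    ring
  rw [hgoalEq]
  have hmx2 : 0 < m / 2 * ‖x‖ ^ 2 := by positivity
  have hpow2 : ((‖x‖:ℝ)^2) ^ θ = ‖x‖ ^ (2*θ) := by
    rw [← Real.rpow_natCast ‖x‖ 2, ← Real.rpow_mul (norm_nonneg x)]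
    norm_num
  calc |Φ s - L| ≤ B * s ^ θ := hmain
    _ ≤ B * (m/2 * ‖x‖^2) ^ θ :=
        mul_le_mul_of_nonneg_left
          (Real.rpow_le_rpow_of_nonpos hmx2 hsge hθneg.le) hB0
    _ = (B * (m/2)^θ) * ‖x‖ ^ (2*θ) := by
        rw [Real.mul_rpow (by positivity) (by positivity), hpow2]
        ring
    _ ≤ C * ‖x‖ ^ (2*θ) := by
        apply mul_le_mul_of_nonneg_right _ (Real.rpow_nonneg (norm_nonneg x) _)
        rw [hCdef]; linarith
end

section
/- Let 1 ≤ l < k ≤ n be integers and let H > h ≥ 0 be real numbers; set ℋ := (k−l)/(2(H−h)). For α > 0, β ∈ ℝ, s̄ > 0, let w(s) := β + ∫_{s̄}^s v_α(t) dt on (0,∞). Then w ∈ C²((0,∞)), w'(s) > 1 > 0 and w''(s) < 0 for all s > 0, and w satisfies the ordinary differential equation (w'(s))^k + 2 w''(s) (w'(s))^{k−1} H s − (w'(s))^l − 2 w''(s) (w'(s))^{l−1} h s = 0 for all s > 0. -/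
open scoped BigOperators
open Filter MeasureTheory Set

/-!
Write `m = k - l` and `c = 2ℋh`. Then `v` solves `F (v s) = α s^(-ℋ)` for `F u = (u^m - 1) u^c`,
which is strictly increasing with positive derivative on `(1, ∞)`. So `v` is continuous, and
implicit differentiation gives `s F'(v) v' = -ℋ F(v)`; since `m = 2ℋ(H - h)` this simplifies to
`v' = -v (v^m - 1) / (2 s (H v^m - h))`. Thus `v` is `C¹` with `v' < 0`, while `w' = v` and
`w'' = v'`. The ODE residual factors as `v^(l-1) (v (v^m - 1) + 2 v' s (H v^m - h))`.
-/

open Topology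

lemma strictMonoOn_pow_sub_one_mul_rpow {m : ℕ} (hm : m ≠ 0) {c : ℝ} (hc : 0 ≤ c) :
    StrictMonoOn (fun u : ℝ => (u ^ m - 1) * u ^ c) (Ici 1) := by
  intro a (ha : 1 ≤ a) b (hb : 1 ≤ b) hab
  have hXa : 0 ≤ a ^ m - 1 := sub_nonneg.2 (one_le_pow₀ ha)
  calc (a ^ m - 1) * a ^ c ≤ (a ^ m - 1) * b ^ c := by gcongr
    _ < (b ^ m - 1) * b ^ c := by gcongr

lemma hasDerivAt_pow_sub_one_mul_rpow (m : ℕ) (c : ℝ) {u : ℝ} (hu : 0 < u) :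
    HasDerivAt (fun u : ℝ => (u ^ m - 1) * u ^ c)
      (u ^ (c - 1) * (m * u ^ m + c * (u ^ m - 1))) u := by
  refine (((hasDerivAt_pow m u).sub_const 1).mul
    (Real.hasDerivAt_rpow_const (p := c) (Or.inl hu.ne'))).congr_deriv ?_
  rw [Real.rpow_sub_one hu.ne']
  rcases m with _ | m
  · simp
  · rw [Nat.add_sub_cancel]
    field_simp
    ring

lemma continuousAt_of_strictMonoOn_comp {F v g : ℝ → ℝ} {a s₀ : ℝ} (hF : StrictMonoOn F (Ici a))
    (hv : ∀ᶠ s in 𝓝 s₀, a ≤ v s ∧ F (v s) = g s) (hg : ContinuousAt g s₀) (ha : a < v s₀) :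
    ContinuousAt v s₀ := by
  have hFv₀ : F (v s₀) = g s₀ := hv.self_of_nhds.2
  refine tendsto_order.2 ⟨fun b hb => ?_, fun b hb => ?_⟩
  · have hlt : F (max b a) < g s₀ := hFv₀ ▸ hF (le_max_right b a) ha.le (max_lt hb ha)
    filter_upwards [hv, hg.eventually (lt_mem_nhds hlt)] with s ⟨hs, hFs⟩ hgs
    exact (le_max_left b a).trans_lt ((hF.lt_iff_lt (le_max_right b a) hs).1 (hFs ▸ hgs))
  · have hlt : g s₀ < F b := hFv₀ ▸ hF ha.le (ha.trans hb).le hb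
    filter_upwards [hv, hg.eventually (gt_mem_nhds hlt)] with s ⟨hs, hFs⟩ hgs
    exact (hF.lt_iff_lt hs (ha.trans hb).le).1 (hFs ▸ hgs)

lemma contDiffOn_succ_of_hasDerivAt {f f' : ℝ → ℝ} {U : Set ℝ} {n : ℕ} (hU : IsOpen U)
    (hf : ∀ x ∈ U, HasDerivAt f (f' x) x) (hf' : ContDiffOn ℝ n f' U) :
    ContDiffOn ℝ (n + 1) f U :=
  (contDiffOn_succ_iff_deriv_of_isOpen hU).2
    ⟨fun x hx => (hf x hx).differentiableAt.differentiableWithinAt, by simp,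
      hf'.congr fun x hx => (hf x hx).deriv⟩

lemma hasDerivAt_const_add_integral {v : ℝ → ℝ} {U : Set ℝ} (hU : IsOpen U)
    (hv : ContinuousOn v U) (β : ℝ) {a s : ℝ} (has : uIcc a s ⊆ U) (hs : s ∈ U) :
    HasDerivAt (fun x => β + ∫ t in a..x, v t) (v s) s :=
  ((intervalIntegral.integral_hasDerivAt_right ((hv.mono has).intervalIntegrable)
    (hv.stronglyMeasurableAtFilter hU s hs) (hv.continuousAt (hU.mem_nhds hs))).const_add β)

lemma ode_residual_eq_zero_of_factor {k l : ℕ} (hl : 1 ≤ l) (hlk : l ≤ k) {H h s p q : ℝ}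
    (hpq : p * (p ^ (k - l) - 1) + 2 * q * s * (H * p ^ (k - l) - h) = 0) :
    p ^ k + 2 * q * p ^ (k - 1) * H * s - p ^ l - 2 * q * p ^ (l - 1) * h * s = 0 := by
  obtain ⟨j, rfl⟩ := Nat.exists_eq_add_of_le hl
  obtain ⟨m, rfl⟩ := Nat.exists_eq_add_of_le hlk
  simp only [add_tsub_cancel_left] at hpq ⊢
  rw [show 1 + j + m - 1 = j + m by omega]
  linear_combination p ^ j * hpq

section Vsol

variable {k l : ℕ} {H h α : ℝ} {v : ℝ → ℝ}

lemma calH_pos (hlk : l < k) (hHh : h < H) : 0 < calH k l H h :=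
  div_pos (by simpa using hlk) (by linarith)

lemma two_mul_calH_mul_sub (hlk : l ≤ k) (hHh : h < H) :
    2 * calH k l H h * (H - h) = ((k - l : ℕ) : ℝ) := by
  rw [calH, Nat.cast_sub hlk]
  field_simp [(sub_pos.2 hHh).ne']

lemma IsVsol.one_lt_pow (hv : IsVsol k l H h α v) (hlk : l < k) {s : ℝ} (hs : 0 < s) :
    1 < v s ^ (k - l) :=
  one_lt_pow₀ (hv s hs).1 (Nat.sub_ne_zero_of_lt hlk)

lemma IsVsol.mul_pow_sub_pos (hv : IsVsol k l H h α v) (hlk : l < k) (hh : 0 ≤ h) (hHh : h < H)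
    {s : ℝ} (hs : 0 < s) : 0 < H * v s ^ (k - l) - h := by
  nlinarith [hv.one_lt_pow hlk hs]

lemma IsVsol.continuousAt (hv : IsVsol k l H h α v) (hlk : l < k) (hh : 0 ≤ h) (hHh : h < H)
    {s : ℝ} (hs : 0 < s) : ContinuousAt v s := by
  have hc : 0 ≤ 2 * calH k l H h * h := by have := calH_pos hlk hHh; positivity
  refine continuousAt_of_strictMonoOn_comp (g := fun s => α * s ^ (-calH k l H h))
    (strictMonoOn_pow_sub_one_mul_rpow (Nat.sub_ne_zero_of_lt hlk) hc) ?_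
    ((Real.continuousAt_rpow_const _ _ (Or.inl hs.ne')).const_mul α) (hv s hs).1
  filter_upwards [Ioi_mem_nhds hs] with y hy
  exact ⟨(hv y hy).1.le, (hv y hy).2⟩

lemma IsVsol.hasDerivAt (hv : IsVsol k l H h α v) (hlk : l < k) (hh : 0 ≤ h) (hHh : h < H)
    {s : ℝ} (hs : 0 < s) :
    HasDerivAt v (-(v s * (v s ^ (k - l) - 1)) / (2 * s * (H * v s ^ (k - l) - h))) s := by
  set K := calH k l H h
  have hK : 0 < K := calH_pos hlk hHh
  obtain ⟨hu, hFu⟩ : 1 < v s ∧ (v s ^ (k - l) - 1) * v s ^ (2 * K * h) = α * s ^ (-K) := hv s hs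
  have hu0 : 0 < v s := one_pos.trans hu
  have hX : 0 < v s ^ (k - l) - 1 := sub_pos.2 (hv.one_lt_pow hlk hs)
  have hm : (0 : ℝ) < (k - l : ℕ) := by exact_mod_cast Nat.sub_pos_of_lt hlk
  have hF' : 0 < v s ^ (2 * K * h - 1) *
      ((k - l : ℕ) * v s ^ (k - l) + 2 * K * h * (v s ^ (k - l) - 1)) := by
    positivity
  have hcomp := HasDerivAt.of_comp_left (hv.continuousAt hlk hh hHh hs)
    (hasDerivAt_pow_sub_one_mul_rpow (k - l) (2 * K * h) hu0)
    ((Real.hasDerivAt_rpow_const (p := -K) (Or.inl hs.ne')).const_mul α) hF'.ne'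
    (by filter_upwards [Ioi_mem_nhds hs] with y hy using (hv y hy).2)
  refine hcomp.congr_deriv ?_
  have hHX := hv.mul_pow_sub_pos hlk hh hHh hs
  have hmK : ((k - l : ℕ) : ℝ) = 2 * K * (H - h) := (two_mul_calH_mul_sub hlk.le hHh).symm
  rw [Real.rpow_sub_one hs.ne', Real.rpow_sub_one hu0.ne', hmK]
  field_simp
  rw [show (H - h) * v s ^ (k - l) + h * (v s ^ (k - l) - 1) = H * v s ^ (k - l) - h by ring,
    mul_div_cancel_right₀ _ hHX.ne', ← hFu]
  ring_nf

lemma IsVsol.contDiffOn_one (hv : IsVsol k l H h α v) (hlk : l < k) (hh : 0 ≤ h) (hHh : h < H) :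
    ContDiffOn ℝ 1 v (Ioi 0) := by
  refine contDiffOn_succ_of_hasDerivAt (n := 0) isOpen_Ioi
    (fun s hs => hv.hasDerivAt hlk hh hHh hs) (contDiffOn_zero.2 ?_)
  have hvc : ContinuousOn v (Ioi 0) := fun s hs =>
    (hv.continuousAt hlk hh hHh hs).continuousWithinAt
  refine ContinuousOn.div (by fun_prop) (by fun_prop) fun s (hs : 0 < s) => ?_
  have hHX := hv.mul_pow_sub_pos hlk hh hHh hs
  positivity

end Vsol

theorem w_solves_ode_general
    (k l : ℕ) (hl1 : 1 ≤ l) (hlk : l < k)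
    (H h : ℝ) (hh : 0 ≤ h) (hHh : h < H)
    (α : ℝ) (β sbar : ℝ) (hsbar : 0 < sbar)
    (v : ℝ → ℝ) (hv : IsVsol k l H h α v) :
    ContDiffOn ℝ 2 (fun s => β + ∫ t in sbar..s, v t) (Set.Ioi (0 : ℝ)) ∧
    ∀ s : ℝ, 0 < s →
      1 < deriv (fun s' => β + ∫ t in sbar..s', v t) s ∧
      deriv (deriv (fun s' => β + ∫ t in sbar..s', v t)) s < 0 ∧
      deriv (fun s' => β + ∫ t in sbar..s', v t) s ^ k +
          2 * deriv (deriv (fun s' => β + ∫ t in sbar..s', v t)) s *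
            deriv (fun s' => β + ∫ t in sbar..s', v t) s ^ (k - 1) * H * s -
          deriv (fun s' => β + ∫ t in sbar..s', v t) s ^ l -
          2 * deriv (deriv (fun s' => β + ∫ t in sbar..s', v t)) s *
            deriv (fun s' => β + ∫ t in sbar..s', v t) s ^ (l - 1) * h * s = 0 := by
  set w := fun s' => β + ∫ t in sbar..s', v t
  have hv₁ := hv.contDiffOn_one hlk hh hHh
  have hw : ∀ s ∈ Ioi (0 : ℝ), HasDerivAt w (v s) s := fun s hs =>
    hasDerivAt_const_add_integral isOpen_Ioi hv₁.continuousOn β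
      (ordConnected_Ioi.uIcc_subset hsbar hs) hs
  have hw' : EqOn (deriv w) v (Ioi 0) := fun s hs => (hw s hs).deriv
  refine ⟨contDiffOn_succ_of_hasDerivAt (n := 1) isOpen_Ioi hw hv₁, fun s hs => ?_⟩
  rw [hw' hs, (hw'.eventuallyEq_of_mem (Ioi_mem_nhds hs)).deriv_eq,
    (hv.hasDerivAt hlk hh hHh hs).deriv]
  have hu := (hv s hs).1
  have hX := sub_pos.2 (hv.one_lt_pow hlk hs)
  have hden : 0 < 2 * s * (H * v s ^ (k - l) - h) := by
    have := hv.mul_pow_sub_pos hlk hh hHh hs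
    positivity
  refine ⟨hu, div_neg_of_neg_of_pos (neg_neg_of_pos (by positivity)) hden,
    ode_residual_eq_zero_of_factor hl1 hlk.le ?_⟩
  linear_combination div_mul_cancel₀ (-(v s * (v s ^ (k - l) - 1))) hden.ne'

/-- `w(s) = β + ∫_{s̄}^s v_α` solves the ODE (2.8):
`(w')^k + 2w''(w')^{k−1}Hs − (w')^l − 2w''(w')^{l−1}hs = 0`, with `w' > 1 > 0`, `w'' < 0`. -/
theorem w_solves_ode
    (n k l : ℕ) (hl1 : 1 ≤ l) (hlk : l < k) (hkn : k ≤ n)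
    (H h : ℝ) (hh : 0 ≤ h) (hHh : h < H)
    (α : ℝ) (hα : 0 < α) (β sbar : ℝ) (hsbar : 0 < sbar)
    (v : ℝ → ℝ) (hv : IsVsol k l H h α v) :
    ContDiffOn ℝ 2 (fun s => β + ∫ t in sbar..s, v t) (Set.Ioi (0 : ℝ)) ∧
    ∀ s : ℝ, 0 < s →
      1 < deriv (fun s' => β + ∫ t in sbar..s', v t) s ∧
      deriv (deriv (fun s' => β + ∫ t in sbar..s', v t)) s < 0 ∧
      deriv (fun s' => β + ∫ t in sbar..s', v t) s ^ k +
          2 * deriv (deriv (fun s' => β + ∫ t in sbar..s', v t)) s *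
            deriv (fun s' => β + ∫ t in sbar..s', v t) s ^ (k - 1) * H * s -
          deriv (fun s' => β + ∫ t in sbar..s', v t) s ^ l -
          2 * deriv (deriv (fun s' => β + ∫ t in sbar..s', v t)) s *
            deriv (fun s' => β + ∫ t in sbar..s', v t) s ^ (l - 1) * h * s = 0 :=
  w_solves_ode_general k l hl1 hlk H h hh hHh α β sbar hsbar v hv
end
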